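/- The discriminant of the polynomial f_m^{C_6}(X) = X^6 - 2mX^5 - 5(m+3)X^4 - 20X^3 + 5mX^2 + 2(m+3)X + 1 equals 6^6·(m^2+3m+9)^5, for any integer m. -/

import Mathlib

/-!
The discriminant of a monic polynomial with roots `r₀, …, r₅` is `det (Vᵀ V)` for the
Vandermonde matrix `V`, i.e. the Hankel determinant `det (p (i + j))` of the power sums
`p k = ∑ rᵢ ^ k`, `k ≤ 10`. Newton's identities give `p 1, …, p 5` from the coefficients,
and multiplying `f(rᵢ) = 0` by `rᵢ ^ k` gives a linear recurrence for the rest, so every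
entry is an explicit polynomial in `m`; the determinant is then a polynomial identity in `m`.
-/

open Polynomial

/-- The simplest sextic polynomial over ℤ. -/
noncomputable def fC6 (m : ℤ) : ℤ[X] :=
  X^6 - C (2*m)*X^5 - C (5*(m+3))*X^4 - C 20*X^3 + C (5*m)*X^2 + C (2*(m+3))*X + 1

open Finset

theorem prod_Ioi_sub_sq_eq_det_sum_pow {R : Type*} [CommRing R] {n : ℕ} (r : Fin n → R) :
    ∏ i, ∏ j ∈ Ioi i, (r i - r j) ^ 2
      = (Matrix.of fun i j : Fin n => ∑ k, r k ^ (i + j : ℕ)).det := by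
  have hW : (Matrix.of fun i j : Fin n => ∑ k, r k ^ (i + j : ℕ))
      = (Matrix.vandermonde r).transpose * Matrix.vandermonde r :=
    Matrix.ext fun i j => (Matrix.vandermonde_transpose_mul_vandermonde r i j).symm
  rw [hW, Matrix.det_mul, Matrix.det_transpose, Matrix.det_vandermonde, ← sq, ← prod_pow]
  refine prod_congr rfl fun i _ => ?_
  rw [← prod_pow]
  exact prod_congr rfl fun j _ => sub_sq_comm _ _

section Newton

variable {R : Type*} [CommRing R] {σ : Type*} [Fintype σ]

theorem esymm_eq_neg_one_pow_mul_coeff_prod_X_sub_C (r : σ → R) {j : ℕ}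
    (hj : j ≤ Fintype.card σ) :
    (univ.val.map r).esymm j = (-1) ^ j * (∏ i, (X - C (r i))).coeff (Fintype.card σ - j) := by
  have := Multiset.prod_X_sub_C_coeff (univ.val.map r) (k := Fintype.card σ - j) (by simp)
  rw [Multiset.card_map, card_val, card_univ, Nat.sub_sub_self hj, Multiset.map_map,
    Function.comp_def, ← prod_eq_multiset_prod] at this
  rw [this, ← mul_assoc, ← pow_add, Even.neg_one_pow ⟨j, rfl⟩, one_mul]

theorem sum_range_esymm_mul_sum_pow_add_eq_zero (r : σ → R) (k : ℕ) :
    ∑ j ∈ range k, (-1) ^ j * (univ.val.map r).esymm j * ∑ i, r i ^ (k - j)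
      + (-1) ^ k * k * (univ.val.map r).esymm k = 0 := by
  have newton := congrArg (MvPolynomial.aeval r) (MvPolynomial.mul_esymm_eq_sum σ R k)
  simp only [map_mul, map_natCast, map_pow, map_neg, map_one, map_sum,
    MvPolynomial.aeval_esymm_eq_multiset_esymm, MvPolynomial.psum, MvPolynomial.aeval_X] at newton
  rw [sum_filter, Nat.sum_antidiagonal_eq_sum_range_succ_mk, sum_range_succ, if_neg (lt_irrefl k),
    add_zero, sum_congr rfl fun j hj => if_pos (mem_range.mp hj)] at newton
  have hsq : (-1 : R) ^ (k + k) = 1 := Even.neg_one_pow ⟨k, rfl⟩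
  linear_combination (-1) ^ k * newton
    - (∑ j ∈ range k, (-1) ^ j * (univ.val.map r).esymm j * ∑ i, r i ^ (k - j)) * hsq

end Newton

/-- The power sums of the roots of `fC6 m`: the first five values come from Newton's identities,
the recurrence from `X ^ k * fC6 m` vanishing at every root. -/
def fC6PowerSum (m : ℤ) : ℕ → ℤ
  | 0 => 6
  | 1 => 2 * m
  | 2 => 4 * m ^ 2 + 10 * m + 30
  | 3 => 8 * m ^ 3 + 30 * m ^ 2 + 90 * m + 60
  | 4 => 16 * m ^ 4 + 80 * m ^ 3 + 290 * m ^ 2 + 440 * m + 450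
  | 5 => 32 * m ^ 5 + 200 * m ^ 4 + 850 * m ^ 3 + 1850 * m ^ 2 + 2740 * m + 1470
  | k + 6 => 2 * m * fC6PowerSum m (k + 5) + 5 * (m + 3) * fC6PowerSum m (k + 4)
      + 20 * fC6PowerSum m (k + 3) - 5 * m * fC6PowerSum m (k + 2)
      - 2 * (m + 3) * fC6PowerSum m (k + 1) - fC6PowerSum m k

section Roots

variable (m : ℤ) {r : Fin 6 → ℂ} (h : (fC6 m).map (Int.castRingHom ℂ) = ∏ i, (X - C (r i)))
include h

theorem pow_six_of_roots_fC6 (i : Fin 6) :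
    r i ^ 6 = 2 * m * r i ^ 5 + 5 * (m + 3) * r i ^ 4 + 20 * r i ^ 3
      - 5 * m * r i ^ 2 - 2 * (m + 3) * r i - 1 := by
  have hroot := congrArg (eval (r i)) h
  rw [eval_prod, prod_eq_zero (mem_univ i) (by simp)] at hroot
  simp only [fC6, eq_intCast, Int.cast_mul, Int.cast_ofNat, Int.cast_add, Polynomial.map_add,
    Polynomial.map_sub, Polynomial.map_pow, map_X, Polynomial.map_mul, Polynomial.map_ofNat,
    Polynomial.map_intCast, Polynomial.map_one, eval_add, eval_sub, eval_pow, eval_X, eval_mul,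
    eval_ofNat, eval_intCast, eval_one] at hroot
  linear_combination hroot

theorem esymm_roots_fC6 {j : ℕ} (hj : j ≤ 6) :
    (univ.val.map r).esymm j = (-1) ^ j * ((fC6 m).coeff (6 - j) : ℂ) := by
  rw [esymm_eq_neg_one_pow_mul_coeff_prod_X_sub_C r (by simpa using hj), ← h, Fintype.card_fin,
    coeff_map, eq_intCast]

theorem sum_pow_roots_fC6 (k : ℕ) : ∑ i, r i ^ k = fC6PowerSum m k := by
  induction k using Nat.strong_induction_on with | _ k ih => ?_
  rcases lt_or_ge k 6 with hk | hk
  · have newton := sum_range_esymm_mul_sum_pow_add_eq_zero r k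
    interval_cases k
    · simp [fC6PowerSum]
    all_goals
      simp (disch := norm_num) only [sum_range_succ, sum_range_zero, esymm_roots_fC6 m h, ih, fC6,
        coeff_add, coeff_sub, coeff_C_mul_X_pow, coeff_C_mul_X, coeff_X_pow, coeff_one] at newton
      norm_num [fC6PowerSum] at newton ⊢
      linear_combination newton
  · obtain ⟨k, rfl⟩ := Nat.exists_eq_add_of_le' hk
    calc ∑ i, r i ^ (k + 6)
        = ∑ i, (2 * m * r i ^ (k + 5) + 5 * (m + 3) * r i ^ (k + 4) + 20 * r i ^ (k + 3)
            - 5 * m * r i ^ (k + 2) - 2 * (m + 3) * r i ^ (k + 1) - r i ^ k) :=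
          sum_congr rfl fun i _ => by linear_combination r i ^ k * pow_six_of_roots_fC6 m h i
      _ = fC6PowerSum m (k + 6) := by
          simp only [sum_add_distrib, sum_sub_distrib, ← mul_sum]
          rw [ih k (by omega), ih (k + 1) (by omega), ih (k + 2) (by omega), ih (k + 3) (by omega),
            ih (k + 4) (by omega), ih (k + 5) (by omega), fC6PowerSum]
          push_cast
          ring

end Roots

set_option maxHeartbeats 1000000 in
theorem det_fC6PowerSum (m : ℤ) :
    (Matrix.of fun i j : Fin 6 => fC6PowerSum m (i + j)).det
      = 6 ^ 6 * (m ^ 2 + 3 * m + 9) ^ 5 := by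
  have h6 : fC6PowerSum m 6
      = 64*m^6 + 480*m^5 + 2340*m^4 + 6490*m^3 + 12576*m^2 + 13428*m + 7944 := by
    simp only [fC6PowerSum]; ring
  have h7 : fC6PowerSum m 7 = 128*m^7 + 1120*m^6 + 6160*m^5 + 20510*m^4 + 48594*m^3
      + 73612*m^2 + 72716*m + 30870 := by
    simp only [fC6PowerSum]; ring
  have h8 : fC6PowerSum m 8 = 256*m^8 + 2560*m^7 + 15680*m^6 + 60480*m^5 + 168322*m^4
      + 322896*m^3 + 435648*m^2 + 354760*m + 148170 := by
    simp only [fC6PowerSum]; ring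
  have h9 : fC6PowerSum m 9 = 512*m^9 + 5760*m^8 + 38880*m^7 + 169680*m^6 + 540162*m^5
      + 1238706*m^4 + 2087748*m^3 + 2412450*m^2 + 1799010*m + 619170 := by
    simp only [fC6PowerSum]; ring
  have h10 : fC6PowerSum m 10 = 1024*m^10 + 12800*m^9 + 94400*m^8 + 458400*m^7 + 1637860*m^6
      + 4337130*m^5 + 8689640*m^4 + 12746700*m^3 + 13294770*m^2 + 8695370*m + 2830680 := by
    simp only [fC6PowerSum]; ring
  simp only [Matrix.det_succ_row_zero, Fin.sum_univ_succ, Matrix.submatrix_apply, Matrix.of_apply,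
    Fin.succ_zero_eq_one, Matrix.submatrix_submatrix, Matrix.det_unique, Fin.default_eq_zero,
    Function.comp_apply, Fin.succ_one_eq_two, Fin.val_zero, Fin.zero_succAbove, univ_unique,
    Fin.val_succ, Fin.val_eq_zero, Fin.succ_succAbove_zero, sum_singleton, Fin.succ_succAbove_one,
    Fin.succ_succAbove_succ]
  norm_num [Fin.succAbove, Fin.lt_def]
  rw [h6, h7, h8, h9, h10]
  simp only [fC6PowerSum]
  ring

/-- The discriminant of the monic sextic `fC6 m`, expressed via its complex roots:
if `fC6 m` splits over `ℂ` with roots `r 0, …, r 5`, then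
`∏_{i<j} (r i - r j)^2 = 6^6 (m^2+3m+9)^5`. -/
theorem stmt8 (m : ℤ) (r : Fin 6 → ℂ)
    (h : (fC6 m).map (Int.castRingHom ℂ) = ∏ i, (X - C (r i))) :
    (∏ i, ∏ j ∈ Finset.Ioi i, (r i - r j)^2) = 6^6 * (m^2+3*m+9)^5 := by
  have hankel : (Matrix.of fun i j : Fin 6 => ∑ k, r k ^ (i + j : ℕ))
      = (Int.castRingHom ℂ).mapMatrix (Matrix.of fun i j : Fin 6 => fC6PowerSum m (i + j)) :=
    Matrix.ext fun i j => sum_pow_roots_fC6 m h _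
  rw [prod_Ioi_sub_sq_eq_det_sum_pow, hankel, ← RingHom.map_det, det_fC6PowerSum, eq_intCast]
  push_cast
  ring
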